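/- For every finite simple graph G, the group of k-algebra automorphisms of the evolution algebra X(G) is isomorphic, as a group, to the automorphism group of the graph G; an isomorphism is given by σ ↦ X(σ). -/

import Mathlib

open scoped BigOperators

variable (k : Type*) [Field k]

section Defs

variable {V : Type*} [Fintype V] [DecidableEq V]

/-- The square `b i * b i` of the `i`-th natural basis vector of the evolution algebra
`X(G)` attached to a simple graph `G`: for a vertex `v`, `b_v * b_v = b_v`; for an edge
`e = {v, w}`, `b_e * b_e = b_e + b_v + b_w`. -/
noncomputable def graphSq (G : SimpleGraph V) [DecidableRel G.Adj] :
    (V ⊕ ↥G.edgeSet) → (V ⊕ ↥G.edgeSet) → k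
  | Sum.inl v => Pi.single (Sum.inl v) 1
  | Sum.inr e => Pi.single (Sum.inr e) 1 +
      ∑ v ∈ Finset.univ.filter (· ∈ (e : Sym2 V)), Pi.single (Sum.inl v) 1

/-- The multiplication of the evolution algebra `X(G)` attached to a simple graph `G`,
as a `k`-bilinear map on the space of functions `(V ⊕ G.edgeSet) → k`.  Distinct natural
basis vectors multiply to zero, and the squares are given by `graphSq`. -/
noncomputable def graphMul (G : SimpleGraph V) [DecidableRel G.Adj] :
    ((V ⊕ ↥G.edgeSet) → k) →ₗ[k] ((V ⊕ ↥G.edgeSet) → k) →ₗ[k] ((V ⊕ ↥G.edgeSet) → k) :=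
  LinearMap.mk₂ k (fun x y => ∑ i, (x i * y i) • graphSq k G i)
    (by intro x x' y; simp [add_mul, add_smul, Finset.sum_add_distrib])
    (by intro c x y; simp [Finset.smul_sum, smul_smul, mul_assoc])
    (by intro x y y'; simp [mul_add, add_smul, Finset.sum_add_distrib])
    (by intro c x y; simp [Finset.smul_sum, smul_smul, mul_assoc, mul_left_comm])

end Defs

/-- The automorphism group of an evolution algebra structure `mul` on a `k`-vector space
`X`: the subgroup of `k`-linear bijections of `X` commuting with the multiplication. -/
def evolutionAut (k : Type*) [Field k] (X : Type*) [AddCommGroup X] [Module k X]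
    (mul : X →ₗ[k] X →ₗ[k] X) : Subgroup (X ≃ₗ[k] X) where
  carrier := {f | ∀ x y : X, f (mul x y) = mul (f x) (f y)}
  one_mem' := by intro x y; rfl
  mul_mem' := by
    intro f g hf hg x y
    show f (g (mul x y)) = mul (f (g x)) (f (g y))
    rw [hg, hf]
  inv_mem' := by
    intro f hf x y
    apply f.injective
    show f (f.symm (mul x y)) = f (mul (f.symm x) (f.symm y))
    rw [hf]
    simp

/-!
Distinct basis vectors multiply to zero and the squares `b_i * b_i` are linearly independent
(the structure matrix is block unitriangular), so an automorphism `f` sends distinct basis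
vectors to vectors with disjoint supports. Hence `f b_i = c_i b_{π i}` for a permutation `π` and
nonzero scalars `c_i`. Comparing `f (b_i * b_i)` with `f b_i * f b_i` at the coordinate `π i`
gives `c_i = c_i ^ 2`, so `c_i = 1`, and then that `π` preserves the structure matrix. Such a
permutation maps vertices to vertices (the rows with no off-diagonal entry) and preserves
vertex-edge incidence, so it is induced by a unique graph automorphism.
-/
theorem exists_perm_eq_single_of_mul_eq_zero {ι M₀ : Type*} [Finite ι] [DecidableEq ι]
    [MulZeroClass M₀] [NoZeroDivisors M₀] {u : ι → ι → M₀} (hu : ∀ j, u j ≠ 0)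
    (horth : ∀ i j, i ≠ j → ∀ m, u i m * u j m = 0) :
    ∃ (π : Equiv.Perm ι) (c : ι → M₀), (∀ j, c j ≠ 0) ∧ ∀ j, u j = Pi.single (π j) (c j) := by
  choose p hp using fun j => Function.ne_iff.mp (hu j)
  have hinj : Function.Injective p := by
    intro i j hij
    by_contra hne
    exact mul_ne_zero (hp i) (hij ▸ hp j) (horth i j hne (p i))
  let π := Equiv.ofBijective p (Finite.injective_iff_bijective.mp hinj)
  refine ⟨π, fun j => u j (π j), hp, fun j => funext fun m => ?_⟩
  obtain ⟨i, rfl⟩ := π.surjective m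
  rcases eq_or_ne i j with rfl | hij
  · simp
  · rw [Pi.single_eq_of_ne (π.injective.ne hij)]
    exact (mul_eq_zero.mp (horth i j hij (π i))).resolve_left (hp i)

section PermLinearEquiv

variable {ι : Type*}

noncomputable def permLinearEquiv : Equiv.Perm ι →* ((ι → k) ≃ₗ[k] (ι → k)) where
  toFun π := LinearEquiv.funCongrLeft k k π.symm
  map_one' := rfl
  map_mul' _ _ := rfl

variable {k}

theorem permLinearEquiv_apply (π : Equiv.Perm ι) (x : ι → k) (i : ι) :
    permLinearEquiv k π x i = x (π.symm i) := rfl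

theorem permLinearEquiv_single [DecidableEq ι] (π : Equiv.Perm ι) (i : ι) (a : k) :
    permLinearEquiv k π (Pi.single i a) = Pi.single (π i) a := by
  funext j
  simp [permLinearEquiv_apply, Pi.single_apply, Equiv.symm_apply_eq]

theorem permLinearEquiv_injective [DecidableEq ι] :
    Function.Injective (permLinearEquiv k (ι := ι)) := by
  intro π π' h
  ext i
  have hi := congrArg (· (Pi.single i (1 : k)) (π i)) h
  simpa [permLinearEquiv_single, Pi.single_apply, eq_comm] using hi

end PermLinearEquiv

section EvolutionAlgebra

variable {ι : Type*} [Fintype ι]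

noncomputable def evolutionMul (s : ι → ι → k) : (ι → k) →ₗ[k] (ι → k) →ₗ[k] (ι → k) :=
  LinearMap.mk₂ k (fun x y => ∑ i, (x i * y i) • s i)
    (by intro x x' y; simp [add_mul, add_smul, Finset.sum_add_distrib])
    (by intro c x y; simp [Finset.smul_sum, smul_smul, mul_assoc])
    (by intro x y y'; simp [mul_add, add_smul, Finset.sum_add_distrib])
    (by intro c x y; simp [Finset.smul_sum, smul_smul, mul_left_comm])

variable {k}

def invariantPerms (s : ι → ι → k) : Subgroup (Equiv.Perm ι) where
  carrier := {π | ∀ i j, s (π i) (π j) = s i j}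
  one_mem' _ _ := rfl
  mul_mem' hπ hπ' i j := (hπ _ _).trans (hπ' i j)
  inv_mem' {π} hπ i j := by simpa using (hπ (π⁻¹ i) (π⁻¹ j)).symm

variable {s : ι → ι → k}

theorem evolutionMul_apply (x y : ι → k) :
    evolutionMul k s x y = ∑ i, (x i * y i) • s i := rfl

theorem permLinearEquiv_mem_evolutionAut {π : Equiv.Perm ι} (hπ : π ∈ invariantPerms s) :
    permLinearEquiv k π ∈ evolutionAut k (ι → k) (evolutionMul k s) := by
  intro x y
  have hs : ∀ i, permLinearEquiv k π (s i) = s (π i) := fun i => funext fun j => by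
    rw [permLinearEquiv_apply, ← hπ, Equiv.apply_symm_apply]
  simp only [evolutionMul_apply, map_sum, map_smul, hs, permLinearEquiv_apply]
  exact Fintype.sum_equiv π _ _ fun i => by simp

variable [DecidableEq ι]

theorem evolutionMul_single_single (i j : ι) (a b : k) :
    evolutionMul k s (Pi.single i a) (Pi.single j b) = if i = j then (a * b) • s i else 0 := by
  split_ifs with hij
  · subst hij
    rw [evolutionMul_apply, Finset.sum_eq_single i (fun m _ hm => by simp [hm]) (by simp)]
    simp
  · refine Finset.sum_eq_zero fun m _ => ?_
    rcases eq_or_ne m i with rfl | hmi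
    · simp [hij]
    · simp [hmi]

theorem exists_perm_of_mem_evolutionAut (hs : LinearIndependent k s) (hdiag : ∀ i, s i i = 1)
    {f : (ι → k) ≃ₗ[k] (ι → k)} (hf : f ∈ evolutionAut k (ι → k) (evolutionMul k s)) :
    ∃ π ∈ invariantPerms s, ∀ j, f (Pi.single j 1) = Pi.single (π j) 1 := by
  have horth : ∀ i j, i ≠ j → ∀ m, f (Pi.single i 1) m * f (Pi.single j 1) m = 0 := by
    intro i j hij
    have h := hf (Pi.single i 1) (Pi.single j 1)
    rw [evolutionMul_single_single, if_neg hij, map_zero, evolutionMul_apply] at h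
    exact Fintype.linearIndependent_iff.mp hs _ h.symm
  have hne : ∀ j, f (Pi.single j 1) ≠ 0 := fun j =>
    f.map_ne_zero_iff.mpr (Pi.single_ne_zero_iff.mpr one_ne_zero)
  obtain ⟨π, c, hc, hfc⟩ := exists_perm_eq_single_of_mul_eq_zero hne horth
  have hcoord : ∀ x m, f x (π m) = c m * x m := by
    intro x m
    conv_lhs => rw [pi_eq_sum_univ' x]
    simp [hfc, Pi.single_apply, π.injective.eq_iff, mul_comm]
  have hsq : ∀ j m, c m * s j m = c j * c j * s (π j) (π m) := by
    intro j m
    have h := congrFun (hf (Pi.single j 1) (Pi.single j 1)) (π m)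
    rwa [evolutionMul_single_single, if_pos rfl, one_mul, one_smul, hcoord, hfc,
      evolutionMul_single_single, if_pos rfl, Pi.smul_apply, smul_eq_mul] at h
  have hc1 : ∀ j, c j = 1 := fun j =>
    mul_left_cancel₀ (hc j) (by simpa [hdiag] using (hsq j j).symm)
  refine ⟨π, fun i j => ?_, fun j => by rw [hfc, hc1]⟩
  simpa [hc1] using (hsq i j).symm

noncomputable def evolutionAutEquiv (hs : LinearIndependent k s) (hdiag : ∀ i, s i i = 1) :
    invariantPerms s ≃* evolutionAut k (ι → k) (evolutionMul k s) :=
  MulEquiv.ofBijective (((permLinearEquiv k).comp (invariantPerms s).subtype).codRestrict _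
      fun π => permLinearEquiv_mem_evolutionAut π.2)
    ⟨fun _ _ h => Subtype.ext (permLinearEquiv_injective (congrArg Subtype.val h)),
      fun ⟨f, hf⟩ => by
        obtain ⟨π, hπ, hfπ⟩ := exists_perm_of_mem_evolutionAut hs hdiag hf
        refine ⟨⟨π, hπ⟩, Subtype.ext (Module.Basis.ext' (Pi.basisFun k ι) fun j => ?_)⟩
        simp [permLinearEquiv_single, hfπ]⟩

end EvolutionAlgebra

section Graph

variable {V : Type*} [Fintype V] [DecidableEq V] (G : SimpleGraph V) [DecidableRel G.Adj]

@[simp]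
theorem graphSq_inl_inl (v w : V) :
    graphSq k G (Sum.inl v) (Sum.inl w) = if v = w then 1 else 0 := by
  simp [graphSq, Pi.single_apply, eq_comm]

@[simp]
theorem graphSq_inl_inr (v : V) (e : G.edgeSet) : graphSq k G (Sum.inl v) (Sum.inr e) = 0 := by
  simp [graphSq]

@[simp]
theorem graphSq_inr_inr (e e' : G.edgeSet) :
    graphSq k G (Sum.inr e) (Sum.inr e') = if e = e' then 1 else 0 := by
  simp [graphSq, Pi.single_apply, eq_comm, Finset.sum_apply]

@[simp]
theorem graphSq_inr_inl (e : G.edgeSet) (v : V) :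
    graphSq k G (Sum.inr e) (Sum.inl v) = if v ∈ (e : Sym2 V) then 1 else 0 := by
  simp [graphSq, Pi.single_apply, Finset.sum_apply]

theorem graphSq_self (i : V ⊕ G.edgeSet) : graphSq k G i i = 1 := by
  cases i <;> simp

theorem linearIndependent_graphSq : LinearIndependent k (graphSq k G) := by
  have hblocks : Matrix.of (graphSq k G) =
      Matrix.fromBlocks 1 0 (Matrix.of fun e v => graphSq k G (Sum.inr e) (Sum.inl v)) 1 := by
    ext (v | e) (w | e') <;> simp [Matrix.one_apply]
  have hdet : (Matrix.of (graphSq k G)).det = 1 := by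
    rw [hblocks, Matrix.det_fromBlocks_zero₁₂, Matrix.det_one, Matrix.det_one, one_mul]
  exact Matrix.linearIndependent_rows_of_det_ne_zero (hdet ▸ one_ne_zero)

theorem mem_range_inl_iff_forall_graphSq_ne_zero (i : V ⊕ G.edgeSet) :
    i ∈ Set.range Sum.inl ↔ ∀ j, graphSq k G i j ≠ 0 → j = i := by
  rcases i with v | e
  · refine iff_of_true ⟨v, rfl⟩ ?_
    rintro (w | e) <;> simp +contextual
  · obtain ⟨v, hv⟩ : ∃ v, v ∈ (e : Sym2 V) := ⟨_, Sym2.out_fst_mem _⟩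
    refine iff_of_false (by simp) fun h => ?_
    simpa using h (Sum.inl v) (by simp [hv])

end Graph

section GraphAut

variable {V : Type*} (G : SimpleGraph V)

def graphPerm : (G ≃g G) →* Equiv.Perm (V ⊕ G.edgeSet) where
  toFun σ := Equiv.sumCongr σ.toEquiv σ.mapEdgeSet
  map_one' := by
    ext (v | e)
    · rfl
    · exact congrArg Sum.inr (Subtype.ext (congrFun Sym2.map_id' _))
  map_mul' σ σ' := by
    ext (v | e)
    · rfl
    · exact congrArg Sum.inr (Subtype.ext (Sym2.map_map (g := σ) (f := σ') (e : Sym2 V)).symm)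

theorem graphPerm_inl (σ : G ≃g G) (v : V) : graphPerm G σ (Sum.inl v) = Sum.inl (σ v) := rfl

theorem graphPerm_inr (σ : G ≃g G) (e : G.edgeSet) :
    graphPerm G σ (Sum.inr e) = Sum.inr (σ.mapEdgeSet e) := rfl

theorem graphPerm_injective : Function.Injective (graphPerm G) :=
  fun _ _ h => RelIso.ext fun v => Sum.inl_injective (congrArg (· (Sum.inl v)) h)

variable {G}

def isoOfEdgePerm (σ : V ≃ V) (τ : Equiv.Perm G.edgeSet)
    (hτ : ∀ e, (τ e : Sym2 V) = Sym2.map σ e) : G ≃g G where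
  toEquiv := σ
  map_rel_iff' {a b} := by
    change s(σ a, σ b) ∈ G.edgeSet ↔ s(a, b) ∈ G.edgeSet
    rw [← Sym2.map_mk]
    refine ⟨fun h => ?_, fun h => hτ ⟨_, h⟩ ▸ (τ _).2⟩
    have hpre : Sym2.map σ s(a, b) = Sym2.map σ (τ.symm ⟨_, h⟩) := by
      simpa only [Equiv.apply_symm_apply] using hτ (τ.symm ⟨_, h⟩)
    exact Sym2.map.injective σ.injective hpre ▸ (τ.symm _).2

theorem mapEdgeSet_isoOfEdgePerm (σ : V ≃ V) (τ : Equiv.Perm G.edgeSet)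
    (hτ : ∀ e, (τ e : Sym2 V) = Sym2.map σ e) : (isoOfEdgePerm σ τ hτ).mapEdgeSet = τ :=
  Equiv.ext fun e => Subtype.ext (hτ e).symm

variable [Fintype V] [DecidableEq V] [DecidableRel G.Adj]

theorem graphPerm_mem_invariantPerms (σ : G ≃g G) :
    graphPerm G σ ∈ invariantPerms (graphSq k G) := by
  rintro (v | e) (w | e')
  · simp [graphPerm_inl, σ.injective.eq_iff]
  · simp [graphPerm_inl, graphPerm_inr]
  · simp [graphPerm_inl, graphPerm_inr, Sym2.mem_map, σ.injective.eq_iff]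
  · simp only [graphPerm_inr, graphSq_inr_inr, σ.mapEdgeSet.injective.eq_iff]

theorem exists_graphPerm_eq {π : Equiv.Perm (V ⊕ G.edgeSet)}
    (hπ : π ∈ invariantPerms (graphSq k G)) :
    ∃ σ, graphPerm G σ = π := by
  have hinl : Set.MapsTo π (Set.range Sum.inl) (Set.range Sum.inl) := by
    intro i hi
    rw [mem_range_inl_iff_forall_graphSq_ne_zero k] at hi ⊢
    intro j hj
    obtain ⟨j, rfl⟩ := π.surjective j
    rw [hπ] at hj
    rw [hi j hj]
  obtain ⟨⟨σ, τ⟩, rfl⟩ := Equiv.Perm.mem_sumCongrHom_range_of_perm_mapsTo_inl hinl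
  have hinc : ∀ e v, σ v ∈ (τ e : Sym2 V) ↔ v ∈ (e : Sym2 V) := by
    intro e v
    have h := hπ (Sum.inr e) (Sum.inl v)
    simp only [Equiv.Perm.sumCongrHom_apply, Equiv.sumCongr_apply, Sum.map_inr, Sum.map_inl,
      graphSq_inr_inl] at h
    split_ifs at h <;> simp_all
  have hτ : ∀ e, (τ e : Sym2 V) = Sym2.map σ e := fun e => Sym2.ext fun x => by
    obtain ⟨v, rfl⟩ := σ.surjective x
    simp [hinc, Sym2.mem_map, σ.injective.eq_iff]
  refine ⟨isoOfEdgePerm σ τ hτ, ?_⟩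
  ext (v | e)
  · rfl
  · simp [graphPerm_inr, mapEdgeSet_isoOfEdgePerm]

noncomputable def graphAutEquiv : (G ≃g G) ≃* invariantPerms (graphSq k G) :=
  MulEquiv.ofBijective ((graphPerm G).codRestrict _ (graphPerm_mem_invariantPerms k))
    ⟨fun _ _ h => graphPerm_injective G (congrArg Subtype.val h),
      fun ⟨_, hπ⟩ => (exists_graphPerm_eq k hπ).imp fun _ h => Subtype.ext h⟩

end GraphAut

/-- For every finite simple graph `G`, the group of `k`-algebra automorphisms of the
evolution algebra `X(G)` is isomorphic, as a group, to the automorphism group of the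
graph `G`; an isomorphism is given by `σ ↦ X(σ)`, i.e. it sends a graph automorphism `σ`
to the algebra automorphism permuting the natural basis accordingly. -/
theorem graphEvolutionAlgebra_autGroup {V : Type*} [Fintype V] [DecidableEq V]
    (G : SimpleGraph V) [DecidableRel G.Adj] :
    ∃ Φ : (G ≃g G) ≃* evolutionAut k ((V ⊕ ↥G.edgeSet) → k) (graphMul k G),
      ∀ σ : G ≃g G,
        (∀ v : V, (Φ σ).1 (Pi.single (Sum.inl v) 1) = Pi.single (Sum.inl (σ v)) 1) ∧
        (∀ e : ↥G.edgeSet,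
          (Φ σ).1 (Pi.single (Sum.inr e) 1) =
            Pi.single (Sum.inr (σ.mapEdgeSet e)) 1) := by
  -- `graphMul k G` unfolds to `evolutionMul k (graphSq k G)`.
  exact ⟨(graphAutEquiv k).trans
      (evolutionAutEquiv (linearIndependent_graphSq k G) (graphSq_self k G)),
    fun σ => ⟨fun v => permLinearEquiv_single _ _ _, fun e => permLinearEquiv_single _ _ _⟩⟩
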